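/- On the flat torus T^n, the shear velocity field U(y) = (h(y²), 0, ..., 0) is a steady solution of the averaged Euler (Euler-α) equation: ∂_t U + (1+Δ)^{-1}[∇_U(1+Δ)U + ⟨∇U⟨·⟩, ΔU⟩^♯] = -grad p with div U = 0, for a suitable pressure p; indeed ∇_U(1+Δ)U = 0 and ⟨∇U⟨·⟩, ΔU⟩^♯ is a gradient. -/

import Mathlib

open Real MeasureTheory Set

lemma contDiff_antideriv {g G : ℝ → ℝ} (hg : ContDiff ℝ ((⊤ : ℕ∞) : WithTop ℕ∞) g)
    (hG : ∀ t, HasDerivAt G (g t) t) : ContDiff ℝ ((⊤ : ℕ∞) : WithTop ℕ∞) G := by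
  have hd : deriv G = g := funext fun t => (hG t).deriv
  exact contDiff_infty_iff_deriv.mpr ⟨fun t => (hG t).differentiableAt, hd ▸ hg⟩

lemma contDiff_infty_deriv {f : ℝ → ℝ} (hf : ContDiff ℝ ((⊤ : ℕ∞) : WithTop ℕ∞) f) :
    ContDiff ℝ ((⊤ : ℕ∞) : WithTop ℕ∞) (deriv f) :=
  (contDiff_infty_iff_deriv.mp hf).2

lemma exists_periodic_solution {f : ℝ → ℝ} (hf : ContDiff ℝ ((⊤ : ℕ∞) : WithTop ℕ∞) f)
    (hper : ∀ x, f (x + 2 * π) = f x) :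
    ∃ φ : ℝ → ℝ, ContDiff ℝ ((⊤ : ℕ∞) : WithTop ℕ∞) φ ∧ (∀ x, φ (x + 2 * π) = φ x) ∧
      (∀ x, φ x - deriv (deriv φ) x = f x) := by
  have hcont : Continuous f := hf.continuous
  obtain ⟨C, hC⟩ : ∃ C, ∀ x, ‖f x‖ ≤ C := by
    have hb := Function.Periodic.isBounded_of_continuous (c := 2 * π) hper
      (by positivity) hcont
    obtain ⟨R, hR⟩ := hb.subset_closedBall 0
    exact ⟨R, fun x => by simpa using hR (Set.mem_range_self x)⟩
  have hint1 : ∀ t, IntegrableOn (fun s => f s * exp s) (Iic t) := fun t =>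
    (integrableOn_exp_Iic t).bdd_mul hcont.aestronglyMeasurable (ae_of_all _ hC)
  have hint2 : ∀ t, IntegrableOn (fun s => f (-s) * exp s) (Iic t) := fun t =>
    (integrableOn_exp_Iic t).bdd_mul (hcont.comp continuous_neg).aestronglyMeasurable
      (ae_of_all _ fun x => hC (-x))
  set A : ℝ → ℝ := fun t => ∫ s in Iic t, f s * exp s with hA_def
  set B : ℝ → ℝ := fun t => ∫ s in Iic t, f (-s) * exp s with hB_def
  have hA : ∀ t, HasDerivAt A (f t * exp t) t := by
    intro t
    have key : ∀ t', A t' = A 0 + ∫ s in (0:ℝ)..t', f s * exp s := by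
      intro t'
      have := intervalIntegral.integral_Iic_sub_Iic (hint1 0) (hint1 t')
      rw [hA_def]; dsimp only; linarith
    rw [funext key]
    exact (((hcont.mul continuous_exp).integral_hasStrictDerivAt 0 t).hasDerivAt).const_add (A 0)
  have hB : ∀ t, HasDerivAt B (f (-t) * exp t) t := by
    intro t
    have key : ∀ t', B t' = B 0 + ∫ s in (0:ℝ)..t', f (-s) * exp s := by
      intro t'
      have := intervalIntegral.integral_Iic_sub_Iic (hint2 0) (hint2 t')
      rw [hB_def]; dsimp only; linarith
    rw [funext key]
    exact ((((hcont.comp continuous_neg).mul continuous_exp).integral_hasStrictDerivAt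
      0 t).hasDerivAt).const_add (B 0)
  -- translation identities
  have hshiftA : ∀ t, A (t + 2 * π) = exp (2 * π) * A t := by
    intro t
    have hmp := (measurePreserving_add_right volume (2 * π)).setIntegral_preimage_emb
      (MeasurableEquiv.addRight (2 * π)).measurableEmbedding
      (fun s => f s * exp s) (Iic (t + 2 * π))
    have hpre : (fun x : ℝ => x + 2 * π) ⁻¹' (Iic (t + 2 * π)) = Iic t := by
      ext x; simp [Set.mem_preimage]
    rw [hpre] at hmp
    calc A (t + 2 * π) = ∫ x in Iic t, f (x + 2 * π) * exp (x + 2 * π) := hmp.symm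
      _ = ∫ x in Iic t, exp (2 * π) * (f x * exp x) := by
          congr 1; ext x; rw [hper x, exp_add]; ring
      _ = exp (2 * π) * A t := by rw [integral_const_mul]
  have hshiftB : ∀ t, B (t + 2 * π) = exp (2 * π) * B t := by
    intro t
    have hmp := (measurePreserving_add_right volume (2 * π)).setIntegral_preimage_emb
      (MeasurableEquiv.addRight (2 * π)).measurableEmbedding
      (fun s => f (-s) * exp s) (Iic (t + 2 * π))
    have hpre : (fun x : ℝ => x + 2 * π) ⁻¹' (Iic (t + 2 * π)) = Iic t := by
      ext x; simp [Set.mem_preimage]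
    rw [hpre] at hmp
    calc B (t + 2 * π) = ∫ x in Iic t, f (-(x + 2 * π)) * exp (x + 2 * π) := hmp.symm
      _ = ∫ x in Iic t, exp (2 * π) * (f (-x) * exp x) := by
          congr 1; ext x
          have : f (-(x + 2 * π)) = f (-x) := by
            have := hper (-x - 2 * π)
            simpa [sub_add_cancel, show -x - 2*π + 2*π = -x by ring,
              show -(x + 2*π) = -x - 2*π by ring] using this.symm
          rw [this, exp_add]; ring
      _ = exp (2 * π) * B t := by rw [integral_const_mul]
  set φ : ℝ → ℝ := fun t => (exp (-t) * A t + exp t * B (-t)) / 2 with hφ_def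
  have hAan : ContDiff ℝ ((⊤ : ℕ∞) : WithTop ℕ∞) A :=
    contDiff_antideriv (hf.mul Real.contDiff_exp) hA
  have hBan : ContDiff ℝ ((⊤ : ℕ∞) : WithTop ℕ∞) B :=
    contDiff_antideriv ((hf.comp contDiff_neg).mul Real.contDiff_exp) hB
  have hφan : ContDiff ℝ ((⊤ : ℕ∞) : WithTop ℕ∞) φ := by
    have := (((Real.contDiff_exp.comp contDiff_neg).mul hAan).add
        (Real.contDiff_exp.mul (hBan.comp contDiff_neg))).div_const 2
    exact this
  have hφper : ∀ x, φ (x + 2 * π) = φ x := by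
    intro x
    have h1 : exp (-(x + 2 * π)) * A (x + 2 * π) = exp (-x) * A x := by
      rw [hshiftA, ← mul_assoc, ← exp_add]
      ring_nf
    have h2 : B (-(x + 2 * π)) = exp (-(2 * π)) * B (-x) := by
      have := hshiftB (-x - 2 * π)
      rw [show -x - 2*π + 2*π = -x by ring] at this
      rw [show -(x + 2*π) = -x - 2*π by ring]
      rw [eq_comm, this, ← mul_assoc, ← exp_add]
      norm_num
    have h3 : exp (x + 2 * π) * B (-(x + 2 * π)) = exp x * B (-x) := by
      rw [h2, ← mul_assoc, ← exp_add]
      ring_nf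
    rw [hφ_def]; dsimp only; rw [h1, h3]
  -- the ODE
  have hexpneg : ∀ t : ℝ, HasDerivAt (fun t : ℝ => exp (-t)) (-exp (-t)) t := by
    intro t
    have := (Real.hasDerivAt_exp (-t)).comp t (hasDerivAt_neg t)
    exact this.congr_deriv (by ring)
  have hBneg : ∀ t : ℝ, HasDerivAt (fun t : ℝ => B (-t)) (-(f t * exp (-t))) t := by
    intro t
    have := (hB (-t)).comp t (hasDerivAt_neg t)
    exact this.congr_deriv (by rw [neg_neg]; ring)
  set ψ : ℝ → ℝ := fun t => (-exp (-t) * A t + exp t * B (-t)) / 2 with hψ_def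
  have hφ' : ∀ t, HasDerivAt φ (ψ t) t := by
    intro t
    have h1 : HasDerivAt (fun t => exp (-t) * A t) (-exp (-t) * A t + exp (-t) * (f t * exp t)) t :=
      (hexpneg t).mul (hA t)
    have h2 : HasDerivAt (fun t => exp t * B (-t)) (exp t * B (-t) + exp t * (-(f t * exp (-t)))) t := by
      have := (Real.hasDerivAt_exp t).mul (hBneg t)
      exact this
    have h3 := (h1.add h2).div_const 2
    refine h3.congr_deriv ?_
    have e1 : exp (-t) * (f t * exp t) = f t := by
      rw [mul_comm (f t) (exp t), ← mul_assoc, ← exp_add]; norm_num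
    have e2 : exp t * (-(f t * exp (-t))) = -(f t) := by
      rw [mul_neg, mul_comm (f t) (exp (-t)), ← mul_assoc, ← exp_add]; norm_num
    rw [hψ_def]; dsimp only
    rw [e1, e2]; ring
  have hψ' : ∀ t, HasDerivAt ψ (φ t - f t) t := by
    intro t
    have h1 : HasDerivAt (fun t => -exp (-t) * A t) (exp (-t) * A t + -exp (-t) * (f t * exp t)) t := by
      have := ((hexpneg t).neg).mul (hA t)
      exact this.congr_deriv (by simp only [Pi.neg_apply]; ring)
    have h2 : HasDerivAt (fun t => exp t * B (-t)) (exp t * B (-t) + exp t * (-(f t * exp (-t)))) t := by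
      have := (Real.hasDerivAt_exp t).mul (hBneg t)
      exact this
    have h3 := (h1.add h2).div_const 2
    refine h3.congr_deriv ?_
    have e1 : -exp (-t) * (f t * exp t) = -(f t) := by
      rw [neg_mul, mul_comm (f t) (exp t), ← mul_assoc, ← exp_add]; norm_num
    have e2 : exp t * (-(f t * exp (-t))) = -(f t) := by
      rw [mul_neg, mul_comm (f t) (exp (-t)), ← mul_assoc, ← exp_add]; norm_num
    rw [hφ_def]; dsimp only
    rw [e1, e2]; ring
  refine ⟨φ, hφan, hφper, ?_⟩
  intro x
  have d1 : deriv φ = ψ := funext fun t => (hφ' t).deriv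
  rw [d1, (hψ' x).deriv]
  ring

lemma fderiv_scal {n : ℕ} (v : Fin n) (q : ℝ → ℝ) (hq : Differentiable ℝ q)
    (y w : Fin n → ℝ) :
    fderiv ℝ (fun z : Fin n → ℝ => q (z v)) y w = deriv q (y v) * w v := by
  have hF : HasFDerivAt (fun z : Fin n → ℝ => q (z v))
      (deriv q (y v) • ContinuousLinearMap.proj (R := ℝ) (φ := fun _ : Fin n => ℝ) v) y :=
    ((hq (y v)).hasDerivAt).comp_hasFDerivAt y (hasFDerivAt_apply v y)
  rw [hF.fderiv]
  simp

lemma fderiv_shear {n : ℕ} (u v : Fin n) (q : ℝ → ℝ) (hq : Differentiable ℝ q)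
    (y w : Fin n → ℝ) :
    fderiv ℝ (fun z : Fin n → ℝ => fun i => if i = u then q (z v) else 0) y w
      = fun i => if i = u then deriv q (y v) * w v else 0 := by
  have hF : HasFDerivAt (fun z : Fin n → ℝ => fun i => if i = u then q (z v) else (0:ℝ))
      (ContinuousLinearMap.pi fun i => if i = u then
          deriv q (y v) • ContinuousLinearMap.proj (R := ℝ) (φ := fun _ : Fin n => ℝ) v
        else 0) y := by
    apply hasFDerivAt_pi''
    intro i
    rw [ContinuousLinearMap.proj_pi]
    by_cases hi : i = u
    · subst hi
      simp only [if_pos rfl]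
      exact ((hq (y v)).hasDerivAt).comp_hasFDerivAt y (hasFDerivAt_apply v y)
    · simp only [if_neg hi]
      exact hasFDerivAt_const 0 y
  rw [hF.fderiv]
  funext i
  by_cases hi : i = u <;> simp [hi]

/-- on the flat torus `Tⁿ` (realized via periodic functions on `ℝⁿ`),
the shear velocity field `U(y) = (h(y²), 0, …, 0)` (here: `U y i = h(y v)` if `i = u`,
else `0`, with `u ≠ v` the two distinguished coordinate directions) is a steady solution
of the averaged Euler (Euler-α) equation
`∂_t U + (1+Δ)⁻¹[∇_U(1+Δ)U + ⟨∇U⟨·⟩, ΔU⟩^♯] = -grad p`, `div U = 0`,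
for a suitable pressure `p`; indeed `div U = 0`, `∇_U(1+Δ)U = 0`, the vector field
`⟨∇U⟨·⟩, ΔU⟩^♯` (components `Σ_j ∂_i U_j (ΔU)_j`) is a gradient, and there is a smooth
periodic `p` with `∇_U(1+Δ)U + ⟨∇U⟨·⟩, ΔU⟩^♯ = -(1+Δ)(grad p)`.
Here `Δ` is the Laplace–de Rham operator, `ΔU = LU` with `LU_j = -Σ_k ∂_k∂_k U_j`. -/
theorem shear_flow_is_steady_solution_of_averaged_euler
    (n : ℕ) (u v : Fin n) (huv : u ≠ v)
    (h : ℝ → ℝ) (hh : ContDiff ℝ (⊤ : ℕ∞) h)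
    (hp : ∀ x, h (x + 2 * π) = h x)
    (U : (Fin n → ℝ) → (Fin n → ℝ))
    (hU : ∀ y, U y = fun i => if i = u then h (y v) else 0)
    (LU : (Fin n → ℝ) → (Fin n → ℝ))
    (hLU : ∀ y j, LU y j
      = -∑ k, fderiv ℝ (fun z => fderiv ℝ U z (Pi.single k 1) j) y (Pi.single k 1)) :
    (∀ y, ∑ i, fderiv ℝ U y (Pi.single i 1) i = 0) ∧
    (∀ y, fderiv ℝ (fun z => U z + LU z) y (U y) = 0) ∧
    (∃ F : (Fin n → ℝ) → ℝ, ContDiff ℝ (⊤ : ℕ∞) F ∧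
      ∀ y i, (∑ j, fderiv ℝ U y (Pi.single i 1) j * LU y j)
        = fderiv ℝ F y (Pi.single i 1)) ∧
    (∃ p : (Fin n → ℝ) → ℝ, ContDiff ℝ (⊤ : ℕ∞) p ∧
      (∀ x i, p (x + Pi.single i (2 * π)) = p x) ∧
      ∀ y i, fderiv ℝ (fun z => U z + LU z) y (U y) i
          + (∑ j, fderiv ℝ U y (Pi.single i 1) j * LU y j)
        = -(fderiv ℝ p y (Pi.single i 1)
            + -∑ k, fderiv ℝ (fun z =>
                fderiv ℝ (fun w => fderiv ℝ p w (Pi.single i 1)) z (Pi.single k 1))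
              y (Pi.single k 1))) := by
  have hU' : U = fun z => fun i => if i = u then h (z v) else 0 := funext hU
  subst hU'
  have hd1 : ContDiff ℝ ((⊤ : ℕ∞) : WithTop ℕ∞) (deriv h) := contDiff_infty_deriv hh
  have hd2 : ContDiff ℝ ((⊤ : ℕ∞) : WithTop ℕ∞) (deriv (deriv h)) := contDiff_infty_deriv hd1
  have hdh : Differentiable ℝ h := hh.differentiable (by simp)
  have hdd1 : Differentiable ℝ (deriv h) := hd1.differentiable (by simp)
  have hdd2 : Differentiable ℝ (deriv (deriv h)) := hd2.differentiable (by simp)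
  have hvu : v ≠ u := Ne.symm huv
  -- closed form for LU
  have hLU' : LU = fun y => fun j => if j = u then -(deriv (deriv h) (y v)) else 0 := by
    funext y j
    rw [hLU y j]
    have e : ∀ k : Fin n,
        fderiv ℝ (fun z => fderiv ℝ
            (fun z : Fin n → ℝ => fun i => if i = u then h (z v) else 0) z (Pi.single k 1) j)
          y (Pi.single k 1)
        = if j = u then
            (deriv (deriv h) (y v)) * ((Pi.single k 1 : Fin n → ℝ) v) * ((Pi.single k 1 : Fin n → ℝ) v) else 0 := by
      intro k
      have e1 : (fun z : Fin n → ℝ => fderiv ℝ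
            (fun z : Fin n → ℝ => fun i => if i = u then h (z v) else 0) z (Pi.single k 1) j)
          = fun z : Fin n → ℝ => if j = u then deriv h (z v) * ((Pi.single k 1 : Fin n → ℝ) v) else 0 := by
        funext z
        rw [fderiv_shear u v h hdh z (Pi.single k 1)]
      rw [e1]
      by_cases hj : j = u
      · simp only [if_pos hj]
        have e2 : (fun z : Fin n → ℝ => deriv h (z v) * ((Pi.single k 1 : Fin n → ℝ) v))
            = fun z : Fin n → ℝ => (fun t => deriv h t * (Pi.single k 1 : Fin n → ℝ) v) (z v) := rfl
        rw [e2, fderiv_scal v _ (hdd1.mul_const _) y (Pi.single k 1)]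
        rw [deriv_mul_const (hdd1 _)]
      · simp only [if_neg hj]
        simp
    rw [Finset.sum_congr rfl (fun k _ => e k)]
    by_cases hj : j = u
    · simp only [if_pos hj, if_pos hj]
      rw [Finset.sum_eq_single v]
      · rw [Pi.single_eq_same]; ring
      · intro b _ hb
        rw [Pi.single_eq_of_ne (Ne.symm hb)]
        ring
      · intro hv; exact absurd (Finset.mem_univ v) hv
    · simp only [if_neg hj]
      simp
  subst hLU'
  -- goal 2 as a lemma
  have hcomb : (fun z : Fin n → ℝ =>
        (fun i => if i = u then h (z v) else 0) + fun j => if j = u then -(deriv (deriv h) (z v)) else 0)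
      = fun z : Fin n → ℝ => fun i => if i = u then (fun t => h t - deriv (deriv h) t) (z v) else 0 := by
    funext z i
    by_cases hi : i = u <;> simp [hi, sub_eq_add_neg]
  have hgoal2 : ∀ y : Fin n → ℝ,
      fderiv ℝ (fun z : Fin n → ℝ =>
        (fun i => if i = u then h (z v) else 0) + fun j => if j = u then -(deriv (deriv h) (z v)) else 0) y
        ((fun i => if i = u then h (y v) else 0) : Fin n → ℝ) = 0 := by
    intro y
    rw [hcomb, fderiv_shear u v (fun t => h t - deriv (deriv h) t) (hdh.sub hdd2) y _]
    funext i
    by_cases hi : i = u <;> simp [hi, if_neg hvu]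
  -- sum term
  have hsum : ∀ (y : Fin n → ℝ) (i : Fin n),
      (∑ j, fderiv ℝ (fun z : Fin n → ℝ => fun i => if i = u then h (z v) else 0) y
          (Pi.single i 1) j * (if j = u then -(deriv (deriv h) (y v)) else 0))
      = -(deriv h (y v) * deriv (deriv h) (y v)) * (Pi.single i 1 : Fin n → ℝ) v := by
    intro y i
    have e : ∀ j : Fin n,
        fderiv ℝ (fun z : Fin n → ℝ => fun i => if i = u then h (z v) else 0) y
            (Pi.single i 1) j * (if j = u then -(deriv (deriv h) (y v)) else 0)
        = if j = u then
            (deriv h (y v) * (Pi.single i 1 : Fin n → ℝ) v) * (-(deriv (deriv h) (y v))) else 0 := by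
      intro j
      rw [fderiv_shear u v h hdh y (Pi.single i 1)]
      by_cases hj : j = u <;> simp [hj]
    rw [Finset.sum_congr rfl (fun j _ => e j)]
    rw [Finset.sum_eq_single u]
    · rw [if_pos rfl]; ring
    · intro b _ hb; rw [if_neg hb]
    · intro hu'; exact absurd (Finset.mem_univ u) hu'
  refine ⟨?_, ?_, ?_, ?_⟩
  · -- divergence free
    intro y
    apply Finset.sum_eq_zero
    intro i _
    rw [fderiv_shear u v h hdh y (Pi.single i 1)]
    by_cases hi : i = u
    · subst hi
      simp [Pi.single_eq_of_ne hvu]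
    · simp [hi]
  · -- convective term vanishes
    intro y
    beta_reduce
    exact hgoal2 y
  · -- gradient form
    have hproj : ContDiff ℝ ((⊤ : ℕ∞) : WithTop ℕ∞) (fun y : Fin n → ℝ => y v) :=
      (ContinuousLinearMap.proj (R := ℝ) (φ := fun _ : Fin n => ℝ) v).contDiff
    refine ⟨fun y : Fin n → ℝ => -(deriv h (y v) * deriv h (y v)) / 2,
      (((hd1.comp hproj).mul (hd1.comp hproj)).neg).div_const 2, ?_⟩
    intro y i
    beta_reduce
    rw [hsum y i]
    have e2 : (fun y : Fin n → ℝ => -(deriv h (y v) * deriv h (y v)) / 2)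
        = fun y : Fin n → ℝ => (fun t => -(deriv h t * deriv h t) / 2) (y v) := rfl
    have hqd : Differentiable ℝ (fun t => -(deriv h t * deriv h t) / 2) :=
      ((hdd1.mul hdd1).neg).div_const 2
    rw [e2, fderiv_scal v _ hqd y (Pi.single i 1)]
    have hq' : deriv (fun t => -(deriv h t * deriv h t) / 2) (y v)
        = -(deriv h (y v) * deriv (deriv h) (y v)) := by
      have h1 : HasDerivAt (fun t => -(deriv h t * deriv h t) / 2)
          (-(deriv h (y v) * deriv (deriv h) (y v))) (y v) := by
        have h2 := (((hdd1 (y v)).hasDerivAt.mul (hdd1 (y v)).hasDerivAt).neg).div_const 2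
        refine h2.congr_deriv ?_
        ring
      exact h1.deriv
    rw [hq']
  · -- pressure
    have hperh' : ∀ x, deriv h (x + 2 * π) = deriv h x := by
      intro x
      have hfun : (fun y => h (y + 2 * π)) = h := funext hp
      calc deriv h (x + 2 * π) = deriv (fun y => h (y + 2 * π)) x :=
            (deriv_comp_add_const h (2 * π) x).symm
        _ = deriv h x := by rw [hfun]
    have hfan : ContDiff ℝ ((⊤ : ℕ∞) : WithTop ℕ∞) (fun t => deriv h t * deriv h t / 2) :=
      (hd1.mul hd1).div_const 2
    have hfper : ∀ x, (fun t => deriv h t * deriv h t / 2) (x + 2 * π)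
        = (fun t => deriv h t * deriv h t / 2) x := by
      intro x; beta_reduce; rw [hperh']
    obtain ⟨φ, hφan, hφper, hODE⟩ := exists_periodic_solution hfan hfper
    have hφtop : ContDiff ℝ ((⊤ : ℕ∞) : WithTop ℕ∞) φ := hφan
    have hφ1 := contDiff_infty_deriv hφtop
    have hφ2 := contDiff_infty_deriv hφ1
    have hφ3 := contDiff_infty_deriv hφ2
    have hdφ : Differentiable ℝ φ := hφtop.differentiable (by simp)
    have hdφ1 : Differentiable ℝ (deriv φ) := hφ1.differentiable (by simp)
    have hdφ2 : Differentiable ℝ (deriv (deriv φ)) := hφ2.differentiable (by simp)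
    have hdf : Differentiable ℝ (fun t => deriv h t * deriv h t / 2) :=
      (hdd1.mul hdd1).div_const 2
    have hkey : ∀ t, deriv φ t - deriv (deriv (deriv φ)) t
        = deriv h t * deriv (deriv h) t := by
      intro t
      have hfun : φ = fun x => (fun t => deriv h t * deriv h t / 2) x + deriv (deriv φ) x :=
        funext fun x => by have := hODE x; beta_reduce; linarith
      have hder : deriv φ t = deriv (fun t => deriv h t * deriv h t / 2) t
          + deriv (deriv (deriv φ)) t := by
        conv_lhs => rw [hfun]
        exact ((hdf t).hasDerivAt.add (hdφ2 t).hasDerivAt).deriv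
      have hf' : deriv (fun t => deriv h t * deriv h t / 2) t
          = deriv h t * deriv (deriv h) t := by
        have h1 : HasDerivAt (fun t => deriv h t * deriv h t / 2)
            (deriv h t * deriv (deriv h) t) t := by
          have h2 := ((hdd1 t).hasDerivAt.mul (hdd1 t).hasDerivAt).div_const 2
          refine h2.congr_deriv ?_
          ring
        exact h1.deriv
      rw [hder, hf']; ring
    have hproj : ContDiff ℝ ((⊤ : ℕ∞) : WithTop ℕ∞) (fun y : Fin n → ℝ => y v) :=
      (ContinuousLinearMap.proj (R := ℝ) (φ := fun _ : Fin n => ℝ) v).contDiff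
    refine ⟨fun y : Fin n → ℝ => φ (y v), hφtop.comp hproj, ?_, ?_⟩
    · intro x i
      show φ ((x + Pi.single i (2 * π) : Fin n → ℝ) v) = φ (x v)
      rw [Pi.add_apply]
      by_cases hi : i = v
      · rw [hi, Pi.single_eq_same]
        exact hφper (x v)
      · rw [Pi.single_eq_of_ne (Ne.symm hi), add_zero]
    · intro y i
      beta_reduce
      rw [hgoal2 y]  -- may need adjustment
      rw [Pi.zero_apply, zero_add, hsum y i]
      -- now RHS
      have step1 : ∀ w : Fin n → ℝ, fderiv ℝ (fun z : Fin n → ℝ => φ (z v)) w (Pi.single i 1)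
          = deriv φ (w v) * (Pi.single i 1 : Fin n → ℝ) v := fun w => fderiv_scal v φ hdφ w _
      have L : ∀ (g : ℝ → ℝ), Differentiable ℝ g → ∀ (c : ℝ) (z w : Fin n → ℝ),
          fderiv ℝ (fun x : Fin n → ℝ => g (x v) * c) z w = deriv g (z v) * c * w v := by
        intro g hg c z w
        have e0 : (fun x : Fin n → ℝ => g (x v) * c)
            = fun x : Fin n → ℝ => (fun t => g t * c) (x v) := rfl
        rw [e0, fderiv_scal v _ (hg.mul_const c) z w, deriv_mul_const (hg _)]
      have step2 : ∀ (z : Fin n → ℝ) (k : Fin n),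
          fderiv ℝ (fun w : Fin n → ℝ => fderiv ℝ (fun z : Fin n → ℝ => φ (z v)) w
            (Pi.single i 1)) z (Pi.single k 1)
          = deriv (deriv φ) (z v) * (Pi.single i 1 : Fin n → ℝ) v * (Pi.single k 1 : Fin n → ℝ) v := by
        intro z k
        rw [show (fun w : Fin n → ℝ => fderiv ℝ (fun z : Fin n → ℝ => φ (z v)) w
            (Pi.single i 1)) = fun w : Fin n → ℝ => deriv φ (w v) * (Pi.single i 1 : Fin n → ℝ) v
          from funext fun w => step1 w]
        exact L (deriv φ) hdφ1 _ z _
      have step3 : ∀ k : Fin n,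
          fderiv ℝ (fun z : Fin n → ℝ => fderiv ℝ (fun w : Fin n → ℝ =>
              fderiv ℝ (fun z : Fin n → ℝ => φ (z v)) w (Pi.single i 1)) z (Pi.single k 1))
            y (Pi.single k 1)
          = deriv (deriv (deriv φ)) (y v)
              * ((Pi.single i 1 : Fin n → ℝ) v * (Pi.single k 1 : Fin n → ℝ) v) * (Pi.single k 1 : Fin n → ℝ) v := by
        intro k
        rw [show (fun z : Fin n → ℝ => fderiv ℝ (fun w : Fin n → ℝ =>
              fderiv ℝ (fun z : Fin n → ℝ => φ (z v)) w (Pi.single i 1)) z (Pi.single k 1))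
            = fun z : Fin n → ℝ => deriv (deriv φ) (z v)
                * ((Pi.single i 1 : Fin n → ℝ) v * (Pi.single k 1 : Fin n → ℝ) v)
          from funext fun z => by rw [step2 z k, mul_assoc]]
        exact L (deriv (deriv φ)) hdφ2 _ y _
      rw [step1 y]
      rw [Finset.sum_congr rfl (fun k _ => step3 k)]
      rw [Finset.sum_eq_single v]
      · rw [Pi.single_eq_same]
        have h5 := hkey (y v)
        linear_combination ((Pi.single i 1 : Fin n → ℝ) v) * h5
      · intro b _ hb
        rw [Pi.single_eq_of_ne (Ne.symm hb)]
        ring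
      · intro hv; exact absurd (Finset.mem_univ v) hv
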